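/- Let A > 0 and let θ : ℝ → ℝ be C¹, bounded, even, and nonincreasing on (0,∞). Suppose the maximum over ℝ of the function x ↦ θ(x) − A·(1−|x|^{1/2})⁺ is attained at a point x₀ ∈ (0, 1/2]. Then Hθ(x₀) ≤ −c₀·A·x₀^{1/2}, where c₀ = (2/π)·∫₁² (√z − 1)/(z²−1) dz > 0. -/

import Mathlib

open MeasureTheory Filter Set Topology

/-- The Hilbert transform of an even function `θ`,
`Hθ(x) = (2x/π)·∫₀^∞ (θ(y)-θ(x))/(y²-x²) dy` (for `C¹` functions the integrand extends
continuously across `y = x`, so the integral needs no principal value there). -/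
noncomputable def hilbertEven (θ : ℝ → ℝ) (x : ℝ) : ℝ :=
  (2 * x / Real.pi) * ∫ y in Set.Ioi (0:ℝ), (θ y - θ x) / (y ^ 2 - x ^ 2)

/-- The universal constant `c₀ = (2/π)·∫₁² (√z − 1)/(z²−1) dz`. -/
noncomputable def c0 : ℝ :=
  (2 / Real.pi) * ∫ z in (1:ℝ)..2, (Real.sqrt z - 1) / (z ^ 2 - 1)

/-!
Since `θ` is nonincreasing on `(0, ∞)`, `θ y - θ x₀` and `y² - x₀²` have opposite signs,
so the integrand of `Hθ(x₀)` is nonpositive. On `(x₀, 2x₀] ⊆ (0, 1]` the maximality of `x₀`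
sharpens this to `θ y - θ x₀ ≤ A (√x₀ - √y)`, and the substitution `y = x₀ z` turns the
integral of that bound into `-A x₀^{-1/2} ∫₁² (√z - 1)/(z² - 1) dz`. The integrand is
integrable because `θ` is Lipschitz near `x₀` and bounded at infinity; `c₀ > 0` because
`(√z - 1)/(z² - 1) = 1/((1 + √z)(1 + z))`.
-/

lemma sqrt_sub_sqrt_div_sq_sub_sq {a b : ℝ} (ha : 0 ≤ a) (hb : 0 ≤ b) (hab : a ≠ b) :
    (√b - √a) / (b ^ 2 - a ^ 2) = 1 / ((√a + √b) * (a + b)) := by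
  have hsqrt : √b - √a ≠ 0 := sub_ne_zero.mpr fun h => hab ((Real.sqrt_inj ha hb).mp h.symm)
  have hsum : 0 < a + b := by rcases ha.lt_or_eq with ha' | rfl <;> grind
  have hsqrt_sum : 0 < √a + √b := by
    rcases ha.lt_or_eq with ha' | rfl
    · positivity
    · simp [Real.sqrt_pos.mpr (by grind : 0 < b)]
  have hfactor : b ^ 2 - a ^ 2 = (√b - √a) * ((√a + √b) * (a + b)) := by
    linear_combination (a + b) * (Real.sq_sqrt ha - Real.sq_sqrt hb)
  rw [hfactor, div_mul_cancel_left₀ hsqrt, one_div]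

lemma integral_sqrt_sub_one_div_sq_sub_one :
    ∫ z in (1:ℝ)..2, (√z - 1) / (z ^ 2 - 1) = ∫ z in (1:ℝ)..2, 1 / ((1 + √z) * (1 + z)) := by
  refine intervalIntegral.integral_congr_ae (ae_of_all _ fun z hz => ?_)
  rw [uIoc_of_le one_le_two] at hz
  simpa using sqrt_sub_sqrt_div_sq_sub_sq zero_le_one (by linarith [hz.1]) hz.1.ne

lemma c0_pos : 0 < c0 := by
  rw [c0, integral_sqrt_sub_one_div_sq_sub_one]
  have hden : ∀ z ∈ Icc (1:ℝ) 2, 0 < (1 + √z) * (1 + z) := fun z hz =>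
    mul_pos (by positivity) (by linarith [hz.1])
  refine mul_pos (by positivity)
    (intervalIntegral.intervalIntegral_pos_of_pos_on ?_
      (fun z hz => one_div_pos.mpr (hden z (Ioo_subset_Icc_self hz))) one_lt_two)
  refine ContinuousOn.intervalIntegrable ?_
  rw [uIcc_of_le one_le_two]
  exact continuousOn_const.div (by fun_prop) fun z hz => (hden z hz).ne'

lemma integral_sqrt_sub_sqrt_div_sq_sub_sq {x : ℝ} (hx : 0 < x) :
    ∫ y in x..2 * x, (√x - √y) / (y ^ 2 - x ^ 2)
      = -(∫ z in (1:ℝ)..2, (√z - 1) / (z ^ 2 - 1)) / √x := by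
  have hscale : ∀ z, (√x - √(x * z)) / ((x * z) ^ 2 - x ^ 2)
      = √x / x ^ 2 * -((√z - 1) / (z ^ 2 - 1)) := fun z => by
    rw [Real.sqrt_mul hx.le, ← neg_div, ← mul_div_mul_comm]
    congr 1 <;> ring
  have hsubst := intervalIntegral.smul_integral_comp_mul_left
    (fun y => (√x - √y) / (y ^ 2 - x ^ 2)) x (a := 1) (b := 2)
  rw [mul_one, mul_comm] at hsubst
  rw [← hsubst]
  simp only [hscale, intervalIntegral.integral_const_mul, intervalIntegral.integral_neg,
    smul_eq_mul]
  have hsx : √x ≠ 0 := (Real.sqrt_pos.mpr hx).ne'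
  field_simp
  rw [Real.sq_sqrt hx.le]

lemma integrableOn_sqrt_sub_sqrt_div_sq_sub_sq {x : ℝ} (hx : 0 < x) :
    IntegrableOn (fun y => (√x - √y) / (y ^ 2 - x ^ 2)) (Ioc x (2 * x)) := by
  have hcont : ContinuousOn (fun y => -(1 / ((√x + √y) * (x + y)))) (Icc x (2 * x)) :=
    (continuousOn_const.div (by fun_prop) fun y hy =>
      (mul_pos (by positivity) (by linarith [hy.1])).ne').neg
  refine (hcont.integrableOn_compact isCompact_Icc).mono_set Ioc_subset_Icc_self |>.congr_fun
    (fun y hy => ?_) measurableSet_Ioc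
  dsimp only
  rw [← sqrt_sub_sqrt_div_sq_sub_sq hx.le (by linarith [hy.1]) hy.1.ne, ← neg_div, neg_sub]

lemma integrableOn_Ioc_div_sq_sub_sq_of_lipschitzOnWith {θ : ℝ → ℝ} {K : NNReal} {x b : ℝ}
    (hθ : Continuous θ) (hlip : LipschitzOnWith K θ (Icc 0 b)) (hx : 0 < x) (hxb : x ≤ b) :
    IntegrableOn (fun y => (θ y - θ x) / (y ^ 2 - x ^ 2)) (Ioc 0 b) := by
  have hθm := hθ.measurable
  refine Measure.integrableOn_of_bounded (M := K / x) measure_Ioc_lt_top.ne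
    (by fun_prop : Measurable _).aestronglyMeasurable
    ((ae_restrict_iff' measurableSet_Ioc).mpr (ae_of_all _ fun y hy => ?_))
  rcases eq_or_ne y x with rfl | hne
  · simp only [sub_self, zero_div, norm_zero]
    positivity
  have hdist : 0 < |y - x| := abs_pos.mpr (sub_ne_zero.mpr hne)
  have hnum : |θ y - θ x| ≤ K * |y - x| := by
    simpa only [Real.dist_eq] using
      hlip.dist_le_mul y (Ioc_subset_Icc_self hy) x ⟨hx.le, hxb⟩
  have hden : x * |y - x| ≤ |y ^ 2 - x ^ 2| := by
    rw [show y ^ 2 - x ^ 2 = (y + x) * (y - x) by ring, abs_mul,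
      abs_of_pos (by linarith [hy.1] : 0 < y + x)]
    exact mul_le_mul_of_nonneg_right (by linarith [hy.1]) hdist.le
  calc ‖(θ y - θ x) / (y ^ 2 - x ^ 2)‖ = |θ y - θ x| / |y ^ 2 - x ^ 2| := by
        rw [Real.norm_eq_abs, abs_div]
    _ ≤ K * |y - x| / (x * |y - x|) := div_le_div₀ (by positivity) hnum (by positivity) hden
    _ = K / x := mul_div_mul_right _ _ hdist.ne'

lemma integrableOn_Ioi_div_sq_sub_sq_of_bounded {θ : ℝ → ℝ} {M x : ℝ} (hθ : Continuous θ)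
    (hbdd : ∀ y, |θ y| ≤ M) (hx : 0 < x) :
    IntegrableOn (fun y => (θ y - θ x) / (y ^ 2 - x ^ 2)) (Ioi (2 * x)) := by
  have hdecay : IntegrableOn (fun y : ℝ => y ^ (-2 : ℝ)) (Ioi (2 * x)) :=
    integrableOn_Ioi_rpow_of_lt (by norm_num) (by positivity)
  have hθm := hθ.measurable
  refine (hdecay.const_mul (8 * M / 3)).mono' (by fun_prop : Measurable _).aestronglyMeasurable
    ((ae_restrict_iff' measurableSet_Ioi).mpr (ae_of_all _ fun y hy => ?_))
  have hy : 2 * x < y := hy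
  have hden : 3 / 4 * y ^ 2 ≤ y ^ 2 - x ^ 2 := by nlinarith
  have hnum : |θ y - θ x| ≤ 2 * M := (abs_sub _ _).trans (by linarith [hbdd x, hbdd y])
  rw [Real.norm_eq_abs, abs_div, abs_of_pos (a := y ^ 2 - x ^ 2) (by nlinarith),
    Real.rpow_neg_ofNat, zpow_neg, zpow_two, ← sq]
  calc |θ y - θ x| / (y ^ 2 - x ^ 2) ≤ 2 * M / (3 / 4 * y ^ 2) :=
        div_le_div₀ (by linarith [abs_nonneg (θ y - θ x)]) hnum (by nlinarith) hden
    _ = 8 * M / 3 * (y ^ 2)⁻¹ := by field_simp; ring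

lemma integrableOn_hilbertEven_integrand {θ : ℝ → ℝ} (hθ : ContDiff ℝ 1 θ)
    (hbdd : ∃ M, ∀ y, |θ y| ≤ M) {x : ℝ} (hx : 0 < x) :
    IntegrableOn (fun y => (θ y - θ x) / (y ^ 2 - x ^ 2)) (Ioi 0) := by
  obtain ⟨M, hM⟩ := hbdd
  obtain ⟨K, hlip⟩ := hθ.contDiffOn.exists_lipschitzOnWith one_ne_zero (convex_Icc 0 (2 * x))
    isCompact_Icc
  rw [← Ioc_union_Ioi_eq_Ioi (by positivity : (0:ℝ) ≤ 2 * x)]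
  exact (integrableOn_Ioc_div_sq_sub_sq_of_lipschitzOnWith hθ.continuous hlip hx
    (by linarith)).union (integrableOn_Ioi_div_sq_sub_sq_of_bounded hθ.continuous hM hx)

lemma div_sq_sub_sq_nonpos_of_antitoneOn {θ : ℝ → ℝ} (hθ : AntitoneOn θ (Ioi 0)) {x y : ℝ}
    (hx : 0 < x) (hy : 0 < y) : (θ y - θ x) / (y ^ 2 - x ^ 2) ≤ 0 := by
  rcases le_total y x with hyx | hxy
  · exact div_nonpos_of_nonneg_of_nonpos (sub_nonneg.mpr (hθ hy hx hyx)) (by nlinarith)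
  · exact div_nonpos_of_nonpos_of_nonneg (sub_nonpos.mpr (hθ hx hy hxy)) (by nlinarith)

lemma div_sq_sub_sq_le_indicator_of_max {θ : ℝ → ℝ} {A x y : ℝ}
    (hmono : AntitoneOn θ (Ioi 0))
    (hmax : ∀ z, θ z - A * max (1 - √|z|) 0 ≤ θ x - A * max (1 - √|x|) 0)
    (hx : 0 < x) (hx2 : 2 * x ≤ 1) (hy : 0 < y) :
    (θ y - θ x) / (y ^ 2 - x ^ 2)
      ≤ (Ioc x (2 * x)).indicator (fun y => A * ((√x - √y) / (y ^ 2 - x ^ 2))) y := by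
  by_cases hmem : y ∈ Ioc x (2 * x)
  · rw [indicator_of_mem hmem, ← mul_div_assoc]
    refine div_le_div_of_nonneg_right ?_ (by nlinarith [hmem.1])
    have hweight : ∀ z, 0 < z → z ≤ 1 → max (1 - √|z|) 0 = 1 - √z := fun z hz hz1 => by
      rw [abs_of_pos hz, max_eq_left (sub_nonneg.mpr (Real.sqrt_le_one.mpr hz1))]
    have hy_max := hmax y
    rw [hweight y hy (by linarith [hmem.2]), hweight x hx (by linarith)] at hy_max
    linarith
  · rw [indicator_of_notMem hmem]
    exact div_sq_sub_sq_nonpos_of_antitoneOn hmono hx hy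

theorem stmt_18_general (A : ℝ) (θ : ℝ → ℝ)
    (hC1 : ContDiff ℝ 1 θ)
    (hbdd : ∃ M : ℝ, ∀ x : ℝ, |θ x| ≤ M)
    (hmono : AntitoneOn θ (Set.Ioi 0))
    (x₀ : ℝ) (hx₀ : x₀ ∈ Set.Ioc (0:ℝ) (1 / 2))
    (hmax : ∀ x : ℝ, θ x - A * max (1 - Real.sqrt |x|) 0
                      ≤ θ x₀ - A * max (1 - Real.sqrt |x₀|) 0) :
    0 < c0 ∧ hilbertEven θ x₀ ≤ -(c0 * A * Real.sqrt x₀) := by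
  obtain ⟨hx₀pos, hx₀half⟩ := hx₀
  refine ⟨c0_pos, ?_⟩
  set g := fun y => A * ((√x₀ - √y) / (y ^ 2 - x₀ ^ 2))
  have hcompare : ∫ y in Ioi 0, (θ y - θ x₀) / (y ^ 2 - x₀ ^ 2)
      ≤ ∫ y in Ioi 0, (Ioc x₀ (2 * x₀)).indicator g y :=
    setIntegral_mono_on (integrableOn_hilbertEven_integrand hC1 hbdd hx₀pos)
      (IntegrableOn.integrable_indicator
        ((integrableOn_sqrt_sub_sqrt_div_sq_sub_sq hx₀pos).const_mul A)
        measurableSet_Ioc).integrableOn measurableSet_Ioi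
      fun y hy => div_sq_sub_sq_le_indicator_of_max hmono hmax hx₀pos (by linarith) hy
  have hmiddle : ∫ y in Ioi 0, (Ioc x₀ (2 * x₀)).indicator g y
      = -(A * (∫ z in (1:ℝ)..2, (√z - 1) / (z ^ 2 - 1)) / √x₀) := by
    rw [setIntegral_indicator measurableSet_Ioc,
      inter_eq_right.mpr (Ioc_subset_Ioi_self.trans (Ioi_subset_Ioi hx₀pos.le)),
      integral_const_mul, ← intervalIntegral.integral_of_le (by linarith),
      integral_sqrt_sub_sqrt_div_sq_sub_sq hx₀pos]
    ring
  calc hilbertEven θ x₀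
      ≤ 2 * x₀ / Real.pi * -(A * (∫ z in (1:ℝ)..2, (√z - 1) / (z ^ 2 - 1)) / √x₀) := by
        rw [hilbertEven, ← hmiddle]
        gcongr
    _ = -(c0 * A * √x₀) := by
        rw [c0]
        field_simp
        rw [Real.sq_sqrt hx₀pos.le]
        ring

/-- Theorem: let `A > 0` and let `θ` be `C¹`, bounded, even and nonincreasing on `(0,∞)`.
If the maximum over `ℝ` of `x ↦ θ(x) − A(1−|x|^{1/2})⁺` is attained at `x₀ ∈ (0,1/2]`,
then `Hθ(x₀) ≤ −c₀·A·x₀^{1/2}`, where `c₀ = (2/π)·∫₁² (√z−1)/(z²−1) dz > 0`. -/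
theorem stmt_18 (A : ℝ) (hA : 0 < A) (θ : ℝ → ℝ)
    (hC1 : ContDiff ℝ 1 θ)
    (hbdd : ∃ M : ℝ, ∀ x : ℝ, |θ x| ≤ M)
    (heven : ∀ x : ℝ, θ (-x) = θ x)
    (hmono : AntitoneOn θ (Set.Ioi 0))
    (x₀ : ℝ) (hx₀ : x₀ ∈ Set.Ioc (0:ℝ) (1 / 2))
    (hmax : ∀ x : ℝ, θ x - A * max (1 - Real.sqrt |x|) 0
                      ≤ θ x₀ - A * max (1 - Real.sqrt |x₀|) 0) :
    0 < c0 ∧ hilbertEven θ x₀ ≤ -(c0 * A * Real.sqrt x₀) :=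
  stmt_18_general A θ hC1 hbdd hmono x₀ hx₀ hmax
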